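/- arXiv:2104.13894 — 5 statements merged into one kernel-verified Lean document; each statement's English description precedes it below -/
import Mathlib

section
/- Let a_1, ..., a_m ∈ ℝ^d, let S ⊆ {1,...,m}, and suppose there exist c ∈ ℝ^d and r > 0 such that ‖a_j - c‖ = r for all j ∈ S and ‖a_j - c‖ > r for all j ∉ S. Let x, x' ∈ ℝ^m be two vectors with nonnegative entries summing to 1 such that Σ_j x_j a_j = Σ_j x'_j a_j = y, the support of x' is contained in S, and the support of x is not contained in S. Then Σ_j x'_j ‖y - a_j‖² < Σ_j x_j ‖y - a_j‖². -/
open RealInnerProductSpace Finset in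
lemma key_identity {d m : ℕ} (a : Fin m → EuclideanSpace ℝ (Fin d))
    (c : EuclideanSpace ℝ (Fin d))
    (x : Fin m → ℝ) (y : EuclideanSpace ℝ (Fin d))
    (hxs : ∑ j, x j = 1) (hxy : ∑ j, x j • a j = y) :
    ∑ j, x j * ‖y - a j‖ ^ 2 = ∑ j, x j * ‖a j - c‖ ^ 2 - ‖y - c‖ ^ 2 := by
  have hv : ∑ j, x j • (a j - c) = y - c := by
    simp only [smul_sub, Finset.sum_sub_distrib, ← Finset.sum_smul, hxs, hxy, one_smul]
  have hexp : ∀ j, ‖y - a j‖ ^ 2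
      = ‖y - c‖ ^ 2 - 2 * ⟪y - c, a j - c⟫ + ‖a j - c‖ ^ 2 := by
    intro j
    have : y - a j = (y - c) - (a j - c) := by abel
    rw [this, norm_sub_sq_real]
  calc ∑ j, x j * ‖y - a j‖ ^ 2
      = ∑ j, (x j * ‖y - c‖ ^ 2 - 2 * (x j * ⟪y - c, a j - c⟫) + x j * ‖a j - c‖ ^ 2) := by
        refine Finset.sum_congr rfl fun j _ => ?_
        rw [hexp j]; ring
    _ = (∑ j, x j) * ‖y - c‖ ^ 2 - 2 * ⟪y - c, ∑ j, x j • (a j - c)⟫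
          + ∑ j, x j * ‖a j - c‖ ^ 2 := by
        rw [Finset.sum_add_distrib, Finset.sum_sub_distrib, ← Finset.sum_mul,
          inner_sum, ← Finset.mul_sum]
        simp only [real_inner_smul_right]
    _ = ∑ j, x j * ‖a j - c‖ ^ 2 - ‖y - c‖ ^ 2 := by
        rw [hxs, hv, real_inner_self_eq_norm_sq]
        ring

theorem stmt_1 {d m : ℕ} (a : Fin m → EuclideanSpace ℝ (Fin d))
    (S : Finset (Fin m)) (c : EuclideanSpace ℝ (Fin d)) (r : ℝ) (hr : 0 < r)
    (hin : ∀ j ∈ S, ‖a j - c‖ = r) (hout : ∀ j ∉ S, r < ‖a j - c‖)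
    (x x' : Fin m → ℝ) (y : EuclideanSpace ℝ (Fin d))
    (hx0 : ∀ j, 0 ≤ x j) (hx'0 : ∀ j, 0 ≤ x' j)
    (hxs : ∑ j, x j = 1) (hx's : ∑ j, x' j = 1)
    (hxy : ∑ j, x j • a j = y) (hx'y : ∑ j, x' j • a j = y)
    (hsupp' : ∀ j, x' j ≠ 0 → j ∈ S)
    (hsupp : ∃ j, x j ≠ 0 ∧ j ∉ S) :
    ∑ j, x' j * ‖y - a j‖ ^ 2 < ∑ j, x j * ‖y - a j‖ ^ 2 := by
  rw [key_identity a c x y hxs hxy, key_identity a c x' y hx's hx'y]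
  have h1 : ∑ j, x' j * ‖a j - c‖ ^ 2 = r ^ 2 := by
    have : ∀ j, x' j * ‖a j - c‖ ^ 2 = x' j * r ^ 2 := by
      intro j
      by_cases h : x' j = 0
      · simp [h]
      · rw [hin j (hsupp' j h)]
    rw [Finset.sum_congr rfl fun j _ => this j, ← Finset.sum_mul, hx's, one_mul]
  have h2 : r ^ 2 < ∑ j, x j * ‖a j - c‖ ^ 2 := by
    obtain ⟨j0, hj0, hj0S⟩ := hsupp
    have hlt : ∀ j ∈ Finset.univ, x j * r ^ 2 ≤ x j * ‖a j - c‖ ^ 2 := by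
      intro j _
      by_cases h : j ∈ S
      · rw [hin j h]
      · have := hout j h
        have : r ^ 2 ≤ ‖a j - c‖ ^ 2 := by nlinarith
        exact mul_le_mul_of_nonneg_left this (hx0 j)
    have hstrict : ∃ j ∈ Finset.univ, x j * r ^ 2 < x j * ‖a j - c‖ ^ 2 := by
      refine ⟨j0, Finset.mem_univ _, ?_⟩
      have hx : 0 < x j0 := lt_of_le_of_ne (hx0 j0) (Ne.symm hj0)
      have := hout j0 hj0S
      have h1 : r ^ 2 < ‖a j0 - c‖ ^ 2 := by nlinarith
      exact mul_lt_mul_of_pos_left h1 hx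
    calc r ^ 2 = ∑ j, x j * r ^ 2 := by rw [← Finset.sum_mul, hxs, one_mul]
      _ < _ := Finset.sum_lt_sum hlt hstrict
  linarith
end

section
/- Let a_1, ..., a_m ∈ ℝ^d, let S ⊆ {1,...,m}, and suppose there exist c ∈ ℝ^d and r > 0 such that ‖a_j - c‖ = r for all j ∈ S and ‖a_j - c‖ > r for all j ∉ S. Suppose y ∈ ℝ^d can be written as a convex combination of {a_j : j ∈ S}. Then every minimizer x* of Σ_j x_j ‖y - a_j‖² over the set {x ∈ ℝ^m : x_j ≥ 0, Σ_j x_j = 1, Σ_j x_j a_j = y} has support contained in S. -/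
/-!
By the parallel-axis identity, for any representation `z` of `y` the objective equals
`∑ z j * ‖a j - c‖ ^ 2 - ‖y - c‖ ^ 2`, so minimizing it means minimizing the average of the
squared distances of the atoms to the centre `c`. The representation supported on the Delaunay
cell `S` achieves `r ^ 2`, while every atom outside `S` lies strictly outside the sphere, so any
representation putting mass outside `S` has average strictly larger than `r ^ 2`.
-/

open scoped RealInnerProductSpace

section

variable {ι E : Type*} [Fintype ι]

theorem sum_mul_norm_sub_sq_eq_sub_norm_sq [NormedAddCommGroup E] [InnerProductSpace ℝ E]
    (a : ι → E) (c y : E) (z : ι → ℝ)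
    (hz : ∑ j, z j = 1) (hzy : ∑ j, z j • a j = y) :
    ∑ j, z j * ‖y - a j‖ ^ 2 = ∑ j, z j * ‖a j - c‖ ^ 2 - ‖y - c‖ ^ 2 := by
  have hcentered : ∑ j, z j • (a j - c) = y - c := by
    simp only [smul_sub, Finset.sum_sub_distrib, hzy, ← Finset.sum_smul, hz, one_smul]
  have hterm : ∀ j, z j * ‖y - a j‖ ^ 2 =
      z j * ‖y - c‖ ^ 2 - 2 * ⟪y - c, z j • (a j - c)⟫ + z j * ‖a j - c‖ ^ 2 := by
    intro j
    rw [show y - a j = (y - c) - (a j - c) by abel, norm_sub_sq_real, real_inner_smul_right]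
    ring
  rw [Finset.sum_congr rfl fun j _ => hterm j, Finset.sum_add_distrib, Finset.sum_sub_distrib,
    ← Finset.mul_sum, ← inner_sum, hcentered, ← Finset.sum_mul, hz,
    real_inner_self_eq_norm_sq]
  ring

theorem sum_mul_norm_sub_sq_eq_of_support_subset [SeminormedAddCommGroup E]
    (a : ι → E) (S : Finset ι) (c : E) (r : ℝ)
    (hin : ∀ j ∈ S, ‖a j - c‖ = r) (w : ι → ℝ) (hwS : ∀ j, w j ≠ 0 → j ∈ S)
    (hw : ∑ j, w j = 1) :
    ∑ j, w j * ‖a j - c‖ ^ 2 = r ^ 2 := by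
  have hterm : ∀ j, w j * ‖a j - c‖ ^ 2 = w j * r ^ 2 := by
    intro j
    by_cases h : w j = 0
    · simp [h]
    · rw [hin j (hwS j h)]
  rw [Finset.sum_congr rfl fun j _ => hterm j, ← Finset.sum_mul, hw, one_mul]

theorem mem_of_sum_mul_norm_sub_sq_le [SeminormedAddCommGroup E]
    (a : ι → E) (S : Finset ι) (c : E) {r : ℝ} (hr : 0 ≤ r)
    (hin : ∀ j ∈ S, ‖a j - c‖ = r) (hout : ∀ j ∉ S, r < ‖a j - c‖)
    (x : ι → ℝ) (hx0 : ∀ j, 0 ≤ x j) (hx : ∑ j, x j = 1)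
    (hle : ∑ j, x j * ‖a j - c‖ ^ 2 ≤ r ^ 2) :
    ∀ j, x j ≠ 0 → j ∈ S := by
  have hexcess_nonneg : ∀ j, 0 ≤ x j * (‖a j - c‖ ^ 2 - r ^ 2) := by
    intro j
    refine mul_nonneg (hx0 j) (sub_nonneg.2 ?_)
    by_cases h : j ∈ S
    · rw [hin j h]
    · exact pow_le_pow_left₀ hr (hout j h).le 2
  have hexcess_sum : ∑ j, x j * (‖a j - c‖ ^ 2 - r ^ 2) = 0 := by
    refine le_antisymm ?_ (Finset.sum_nonneg fun j _ => hexcess_nonneg j)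
    simp only [mul_sub, Finset.sum_sub_distrib, ← Finset.sum_mul, hx, one_mul]
    linarith
  intro j hj
  by_contra hjS
  have hexcess_j := (Finset.sum_eq_zero_iff_of_nonneg fun i _ => hexcess_nonneg i).1
    hexcess_sum j (Finset.mem_univ j)
  have hgap : r ^ 2 < ‖a j - c‖ ^ 2 := pow_lt_pow_left₀ (hout j hjS) hr two_ne_zero
  exact hj ((mul_eq_zero.1 hexcess_j).resolve_right (sub_ne_zero.2 hgap.ne'))

end

theorem stmt_2 {d m : ℕ} (a : Fin m → EuclideanSpace ℝ (Fin d))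
    (S : Finset (Fin m)) (c : EuclideanSpace ℝ (Fin d)) (r : ℝ) (hr : 0 < r)
    (hin : ∀ j ∈ S, ‖a j - c‖ = r) (hout : ∀ j ∉ S, r < ‖a j - c‖)
    (y : EuclideanSpace ℝ (Fin d))
    (hy : ∃ w : Fin m → ℝ, (∀ j, 0 ≤ w j) ∧ (∀ j, w j ≠ 0 → j ∈ S) ∧
      ∑ j, w j = 1 ∧ ∑ j, w j • a j = y)
    (x : Fin m → ℝ)
    (hx : (∀ j, 0 ≤ x j) ∧ ∑ j, x j = 1 ∧ ∑ j, x j • a j = y)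
    (hmin : ∀ z : Fin m → ℝ, ((∀ j, 0 ≤ z j) ∧ ∑ j, z j = 1 ∧ ∑ j, z j • a j = y) →
      ∑ j, x j * ‖y - a j‖ ^ 2 ≤ ∑ j, z j * ‖y - a j‖ ^ 2) :
    ∀ j, x j ≠ 0 → j ∈ S := by
  obtain ⟨w, hw0, hwS, hw1, hwy⟩ := hy
  obtain ⟨hx0, hx1, hxy⟩ := hx
  have hle := hmin w ⟨hw0, hw1, hwy⟩
  rw [sum_mul_norm_sub_sq_eq_sub_norm_sq a c y x hx1 hxy,
    sum_mul_norm_sub_sq_eq_sub_norm_sq a c y w hw1 hwy,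
    sum_mul_norm_sub_sq_eq_of_support_subset a S c r hin w hwS hw1, sub_le_sub_iff_right] at hle
  exact mem_of_sum_mul_norm_sub_sq_le a S c hr.le hin hout x hx0 hx1 hle
end

section
/- Let a_1, ..., a_m ∈ ℝ^d have a unique Delaunay triangulation (i.e., for every Delaunay cell with vertex index set S there exist c and r with ‖a_j - c‖ = r for j ∈ S and ‖a_j - c‖ > r for j ∉ S). If y lies in the convex hull of a_1,...,a_m, then the minimizer x of the weighted ℓ1 program min Σ_j x_j ‖y - a_j‖² subject to y = Σ_j x_j a_j, Σ_j x_j = 1, x_j ≥ 0 has support contained in the vertex set of every Delaunay cell containing y; consequently {a_j : x_j ≠ 0} are vertices of a face of the triangulation containing y. -/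
/-!
For weights `w` with barycenter `y`, the objective `∑ w j * ‖y - a j‖ ^ 2` equals
`∑ w j * ‖a j - c‖ ^ 2 - ‖y - c‖ ^ 2` for any point `c`. Take `c` the circumcentre of a Delaunay
cell containing `y`: the barycentric weights of `y` in the cell give `r ^ 2` to the first sum,
while every `a j` lies at distance at least `r` from `c`, with equality exactly on the cell.
Hence a minimizer puts weight only on vertices of the cell.
-/

open Finset

theorem exists_mem_stdSimplex_of_mem_convexHull_image {R ι E : Type*} [Field R] [LinearOrder R]
    [IsStrictOrderedRing R] [Fintype ι] [AddCommGroup E] [Module R E] {p : ι → E} {S : Set ι}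
    {y : E} (hy : y ∈ convexHull R (p '' S)) :
    ∃ z ∈ stdSimplex R ι, (∀ j ∉ S, z j = 0) ∧ ∑ j, z j • p j = y := by
  classical
  have hp : p '' S = Fintype.linearCombination R p '' ((fun j ↦ Pi.single j 1) '' S) := by
    simp [Set.image_image, Fintype.linearCombination_apply_single]
  rw [hp, ← LinearMap.image_convexHull] at hy
  obtain ⟨z, hz, rfl⟩ := hy
  have hsub : convexHull R ((fun j ↦ Pi.single j (1 : R)) '' S) ⊆ Sᶜ.pi fun _ ↦ {0} :=
    convexHull_min (by rintro _ ⟨j, hj, rfl⟩ i hi; simp [ne_of_mem_of_not_mem hj hi])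
      (convex_pi fun _ _ ↦ convex_singleton 0)
  refine ⟨z, ?_, fun j hj ↦ hsub hz j hj, Fintype.linearCombination_apply R p z⟩
  rw [← convexHull_rangle_single_eq_stdSimplex]
  exact convexHull_mono (Set.image_subset_range _ _) hz

theorem sum_mul_norm_sub_sq_eq_of_sum_smul_eq {ι E : Type*} [Fintype ι]
    [NormedAddCommGroup E] [InnerProductSpace ℝ E] {w : ι → ℝ} {p : ι → E} {y : E}
    (hw : ∑ i, w i = 1) (hy : ∑ i, w i • p i = y) (c : E) :
    ∑ i, w i * ‖y - p i‖ ^ 2 = ∑ i, w i * ‖p i - c‖ ^ 2 - ‖y - c‖ ^ 2 := by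
  have hinner : ∑ i, w i * inner ℝ (p i - c) (y - c) = ‖y - c‖ ^ 2 := by
    simp_rw [← real_inner_smul_left, ← sum_inner, smul_sub, sum_sub_distrib, ← sum_smul, hw, hy,
      one_smul, real_inner_self_eq_norm_sq]
  have hsq (i : ι) :
      ‖y - p i‖ ^ 2 = ‖p i - c‖ ^ 2 - 2 * inner ℝ (p i - c) (y - c) + ‖y - c‖ ^ 2 := by
    rw [← norm_sub_sq_real, sub_sub_sub_cancel_right, norm_sub_rev]
  simp_rw [hsq, mul_add, mul_sub, sum_add_distrib, sum_sub_distrib, mul_left_comm _ (2 : ℝ),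
    ← mul_sum, ← sum_mul, hinner, hw]
  ring

theorem eq_of_sum_mul_le_of_forall_le {ι : Type*} [Fintype ι] {x f : ι → ℝ} {t : ℝ}
    (hx : ∀ i, 0 ≤ x i) (hx₁ : ∑ i, x i = 1) (hf : ∀ i, t ≤ f i) (hsum : ∑ i, x i * f i ≤ t)
    {i : ι} (hi : x i ≠ 0) : f i = t := by
  have hterm (j : ι) : 0 ≤ x j * (f j - t) := mul_nonneg (hx j) (sub_nonneg.2 (hf j))
  have hzero : ∑ j, x j * (f j - t) = 0 := by
    refine le_antisymm ?_ (sum_nonneg fun j _ ↦ hterm j)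
    simp_rw [mul_sub, sum_sub_distrib, ← sum_mul, hx₁]
    linarith
  have := (sum_eq_zero_iff_of_nonneg fun j _ ↦ hterm j).1 hzero i (mem_univ i)
  exact sub_eq_zero.1 ((mul_eq_zero.1 this).resolve_left hi)

theorem stmt_5_general {d m : ℕ} (a : Fin m → EuclideanSpace ℝ (Fin d))
    (y : EuclideanSpace ℝ (Fin d))
    (x : Fin m → ℝ)
    (hx : (∀ j, 0 ≤ x j) ∧ ∑ j, x j = 1 ∧ ∑ j, x j • a j = y)
    (hmin : ∀ z : Fin m → ℝ, ((∀ j, 0 ≤ z j) ∧ ∑ j, z j = 1 ∧ ∑ j, z j • a j = y) →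
      ∑ j, x j * ‖y - a j‖ ^ 2 ≤ ∑ j, z j * ‖y - a j‖ ^ 2) :
    ∀ S : Finset (Fin m), ∀ c : EuclideanSpace ℝ (Fin d), ∀ r : ℝ, 0 < r →
      (∀ j ∈ S, ‖a j - c‖ = r) → (∀ j ∉ S, r < ‖a j - c‖) →
      y ∈ convexHull ℝ (a '' S) →
      ∀ j, x j ≠ 0 → j ∈ S := by
  intro S c r hr hS hnotS hyS j hxj
  obtain ⟨hx₀, hx₁, hxy⟩ := hx
  obtain ⟨z, ⟨hz₀, hz₁⟩, hzS, hzy⟩ := exists_mem_stdSimplex_of_mem_convexHull_image hyS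
  have hz_sphere : ∑ i, z i * ‖a i - c‖ ^ 2 = r ^ 2 := by
    rw [← one_mul (r ^ 2), ← hz₁, sum_mul]
    refine sum_congr rfl fun i _ ↦ ?_
    by_cases hi : i ∈ S
    · rw [hS i hi]
    · rw [hzS i hi, zero_mul, zero_mul]
  have hx_le : ∑ i, x i * ‖a i - c‖ ^ 2 ≤ r ^ 2 := by
    have := hmin z ⟨hz₀, hz₁, hzy⟩
    rw [sum_mul_norm_sub_sq_eq_of_sum_smul_eq hx₁ hxy c,
      sum_mul_norm_sub_sq_eq_of_sum_smul_eq hz₁ hzy c] at this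
    linarith
  have h_outside (i : Fin m) : r ^ 2 ≤ ‖a i - c‖ ^ 2 := by
    by_cases hi : i ∈ S
    · rw [hS i hi]
    · exact pow_le_pow_left₀ hr.le (hnotS i hi).le 2
  by_contra hjS
  have := eq_of_sum_mul_le_of_forall_le hx₀ hx₁ h_outside hx_le hxj
  rw [sq_eq_sq₀ (norm_nonneg _) hr.le] at this
  exact (hnotS j hjS).ne' this

theorem stmt_5 {d m : ℕ} (a : Fin m → EuclideanSpace ℝ (Fin d))
    (y : EuclideanSpace ℝ (Fin d))
    (hy : y ∈ convexHull ℝ (Set.range a))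
    (x : Fin m → ℝ)
    (hx : (∀ j, 0 ≤ x j) ∧ ∑ j, x j = 1 ∧ ∑ j, x j • a j = y)
    (hmin : ∀ z : Fin m → ℝ, ((∀ j, 0 ≤ z j) ∧ ∑ j, z j = 1 ∧ ∑ j, z j • a j = y) →
      ∑ j, x j * ‖y - a j‖ ^ 2 ≤ ∑ j, z j * ‖y - a j‖ ^ 2) :
    ∀ S : Finset (Fin m), ∀ c : EuclideanSpace ℝ (Fin d), ∀ r : ℝ, 0 < r →
      (∀ j ∈ S, ‖a j - c‖ = r) → (∀ j ∉ S, r < ‖a j - c‖) →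
      y ∈ convexHull ℝ (a '' S) →
      ∀ j, x j ≠ 0 → j ∈ S :=
  stmt_5_general a y x hx hmin
end

section
/- Let S = {x ∈ ℝ^m : x_j ≥ 0 for all j, Σ_j x_j = 1} be the probability simplex. For any z ∈ ℝ^m, the Euclidean projection of z onto S has the form P_S(z) = ReLU(z + b·1) for some scalar b ∈ ℝ, where ReLU is applied entrywise and 1 is the all-ones vector; moreover b is the unique scalar such that Σ_j max(z_j + b, 0) = 1. -/
/-! Since the simplex is convex, the projection `p` of `z` satisfies the variational inequality
`⟪z - p, q - p⟫ ≤ 0` for every `q` in the simplex. Testing it against the `q` obtained by moving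
the whole mass of a positive coordinate `i` to a coordinate `j` gives `p i - z i ≤ p j - z j`.
Hence `p - z` equals a constant `b` on the support of `p` and is at least `b` elsewhere, which is
`p = max (z + b) 0`. Uniqueness of `b` holds because `b ↦ ∑ j, max (z j + b) 0` is strictly
increasing wherever it is positive. -/

open Finset

theorem real_inner_sub_le_zero_of_forall_norm_sub_le {F : Type*} [NormedAddCommGroup F]
    [InnerProductSpace ℝ F] {K : Set F} (hK : Convex ℝ K) {u v : F} (hv : v ∈ K)
    (hmin : ∀ w ∈ K, ‖v - u‖ ≤ ‖w - u‖) : ∀ w ∈ K, inner ℝ (u - v) (w - v) ≤ 0 := by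
  have : Nonempty K := ⟨⟨v, hv⟩⟩
  refine (norm_eq_iInf_iff_real_inner_le_zero hK hv).1 (le_antisymm ?_ ?_)
  · exact le_ciInf fun w ↦ by simpa only [norm_sub_rev u] using hmin w w.2
  · exact ciInf_le (f := fun w : K ↦ ‖u - w‖)
      ⟨0, Set.forall_mem_range.2 fun _ ↦ norm_nonneg _⟩ ⟨v, hv⟩

section Simplex

variable {ι : Type*} [Fintype ι]

theorem convex_ofLp_preimage_stdSimplex :
    Convex ℝ (WithLp.ofLp ⁻¹' stdSimplex ℝ ι : Set (EuclideanSpace ℝ ι)) :=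
  (convex_stdSimplex ℝ ι).linear_preimage (WithLp.linearEquiv 2 ℝ (ι → ℝ)).toLinearMap

variable [DecidableEq ι]

theorem add_single_sub_single_mem_stdSimplex {p : EuclideanSpace ℝ ι}
    (hp : p ∈ WithLp.ofLp ⁻¹' stdSimplex ℝ ι) (i j : ι) :
    p + EuclideanSpace.single j (p i) - EuclideanSpace.single i (p i) ∈
      WithLp.ofLp ⁻¹' stdSimplex ℝ ι := by
  refine ⟨fun k ↦ ?_, ?_⟩
  · simp only [WithLp.ofLp_sub, WithLp.ofLp_add, Pi.sub_apply, Pi.add_apply, PiLp.single_apply]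
    have := hp.1 k
    have := hp.1 i
    split_ifs with hj hi hi <;> subst_vars <;> linarith
  · simp [sum_add_distrib, sum_sub_distrib, hp.2]

theorem sub_le_sub_of_pos_of_forall_inner_le_zero {p z : EuclideanSpace ℝ ι}
    (hp : p ∈ WithLp.ofLp ⁻¹' stdSimplex ℝ ι)
    (hvar : ∀ w ∈ WithLp.ofLp ⁻¹' stdSimplex ℝ ι, inner ℝ (z - p) (w - p) ≤ 0)
    {i : ι} (hi : 0 < p i) (j : ι) : p i - z i ≤ p j - z j := by
  have h := hvar _ (add_single_sub_single_mem_stdSimplex hp i j)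
  rw [add_sub_assoc, add_sub_cancel_left, inner_sub_right, EuclideanSpace.inner_single_right,
    EuclideanSpace.inner_single_right] at h
  simp only [conj_trivial, PiLp.sub_apply] at h
  nlinarith

end Simplex

theorem eq_max_zero_of_le_of_eq_of_pos {x t : ℝ} (hx : 0 ≤ x) (hle : t ≤ x) (heq : 0 < x → x = t) :
    x = max t 0 := by
  rcases hx.lt_or_eq with hpos | rfl
  · rw [← heq hpos, max_eq_left hx]
  · exact (max_eq_right hle).symm

section Relu

variable {ι : Type*} [Fintype ι]

theorem sum_max_add_lt_sum_max_add (z : ι → ℝ) {b b' : ℝ} (hbb' : b < b')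
    (hpos : 0 < ∑ j, max (z j + b) 0) : ∑ j, max (z j + b) 0 < ∑ j, max (z j + b') 0 := by
  obtain ⟨j, -, hj⟩ := exists_lt_of_sum_lt (s := univ) (f := fun _ ↦ (0 : ℝ)) (by simpa using hpos)
  refine sum_lt_sum (fun k _ ↦ by gcongr) ⟨j, mem_univ j, ?_⟩
  have : 0 < z j + b := by simpa using hj
  rw [max_eq_left this.le]
  exact lt_max_of_lt_left (by linarith)

theorem eq_of_sum_max_add_eq (z : ι → ℝ) {b b' c : ℝ} (hc : 0 < c)
    (hb : ∑ j, max (z j + b) 0 = c) (hb' : ∑ j, max (z j + b') 0 = c) : b' = b := by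
  rcases lt_trichotomy b' b with h | h | h
  · have := sum_max_add_lt_sum_max_add z h (hb'.symm ▸ hc); linarith
  · exact h
  · have := sum_max_add_lt_sum_max_add z h (hb.symm ▸ hc); linarith

end Relu

theorem stmt_8_general {m : ℕ} (z p : EuclideanSpace ℝ (Fin m))
    (hp : ((∀ j, 0 ≤ p j) ∧ ∑ j, p j = 1) ∧
      ∀ q : EuclideanSpace ℝ (Fin m), ((∀ j, 0 ≤ q j) ∧ ∑ j, q j = 1) →
        ‖p - z‖ ≤ ‖q - z‖) :
    ∃ b : ℝ, (∀ j, p j = max (z j + b) 0) ∧ (∑ j, max (z j + b) 0 = 1) ∧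
      ∀ b' : ℝ, (∑ j, max (z j + b') 0 = 1) → b' = b := by
  obtain ⟨hpS, hmin⟩ := hp
  have hvar := real_inner_sub_le_zero_of_forall_norm_sub_le
    (K := WithLp.ofLp ⁻¹' stdSimplex ℝ (Fin m)) convex_ofLp_preimage_stdSimplex hpS hmin
  obtain ⟨i, -, hi⟩ := exists_lt_of_sum_lt (s := univ) (f := fun _ ↦ 0) (g := p) (by simp [hpS.2])
  have hmono {k : Fin m} (hk : 0 < p k) (j : Fin m) :=
    sub_le_sub_of_pos_of_forall_inner_le_zero hpS hvar hk j
  have hform : ∀ j, p j = max (z j + (p i - z i)) 0 := fun j ↦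
    eq_max_zero_of_le_of_eq_of_pos (hpS.1 j) (by linarith [hmono hi j])
      (fun hj ↦ by linarith [hmono hi j, hmono hj i])
  have hsum : ∑ j, max (z j + (p i - z i)) 0 = 1 := by simp only [← hform, hpS.2]
  exact ⟨p i - z i, hform, hsum, fun b' hb' ↦ eq_of_sum_max_add_eq z one_pos hsum hb'⟩

theorem stmt_8 {m : ℕ} (hm : 0 < m) (z p : EuclideanSpace ℝ (Fin m))
    (hp : ((∀ j, 0 ≤ p j) ∧ ∑ j, p j = 1) ∧
      ∀ q : EuclideanSpace ℝ (Fin m), ((∀ j, 0 ≤ q j) ∧ ∑ j, q j = 1) →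
        ‖p - z‖ ≤ ‖q - z‖) :
    ∃ b : ℝ, (∀ j, p j = max (z j + b) 0) ∧ (∑ j, max (z j + b) 0 = 1) ∧
      ∀ b' : ℝ, (∑ j, max (z j + b') 0 = 1) → b' = b :=
  stmt_8_general z p hp
end

section
/- Under the hypotheses of the previous statement (empty circumsphere for S), for any feasible x (nonnegative, summing to 1, Σ_j x_j a_j = y) we have Σ_j x_j ‖y - a_j‖² ≥ r² - ‖y - c‖², with equality if and only if supp(x) ⊆ S. -/
/-!
Write `y = ∑ x_j a_j` as a barycentre. The parallel-axis identity
`∑ x_j ‖y - a_j‖² = ∑ x_j ‖a_j - c‖² - ‖y - c‖²` reduces the claim to the weighted mean of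
`‖a_j - c‖²`, and every point lies on or outside the sphere of radius `r`, strictly outside
exactly off `S`; so that mean is at least `r²`, with equality iff the weights live on `S`.
-/

open Finset

section ParallelAxis

variable {ι E : Type*} [Fintype ι] [NormedAddCommGroup E] [InnerProductSpace ℝ E]

theorem sum_mul_norm_sub_sq_eq_sub {w : ι → ℝ} {p : ι → E} {y : E} (hw : ∑ j, w j = 1)
    (hy : ∑ j, w j • p j = y) (c : E) :
    ∑ j, w j * ‖y - p j‖ ^ 2 = ∑ j, w j * ‖p j - c‖ ^ 2 - ‖y - c‖ ^ 2 := by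
  have hyc : ∑ j, w j • (p j - c) = y - c := by
    simp only [smul_sub]
    rw [sum_sub_distrib, hy, ← sum_smul, hw, one_smul]
  have hinner : ∑ j, w j * inner ℝ (p j - c) (y - c) = ‖y - c‖ ^ 2 := by
    simp only [← real_inner_smul_left, ← sum_inner, hyc, real_inner_self_eq_norm_sq]
  have hexpand : ∀ j, ‖y - p j‖ ^ 2 =
      ‖p j - c‖ ^ 2 - 2 * inner ℝ (p j - c) (y - c) + ‖y - c‖ ^ 2 := fun j => by
    rw [← norm_sub_sq_real, ← norm_neg]
    congr 2
    abel
  calc ∑ j, w j * ‖y - p j‖ ^ 2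
      = ∑ j, w j * ‖p j - c‖ ^ 2 - 2 * ∑ j, w j * inner ℝ (p j - c) (y - c)
          + (∑ j, w j) * ‖y - c‖ ^ 2 := by
        simp only [hexpand, mul_add, mul_sub, sum_add_distrib, sum_sub_distrib, mul_sum,
          sum_mul, mul_left_comm (w _) 2]
    _ = _ := by rw [hinner, hw]; ring

end ParallelAxis

section WeightedMean

variable {ι : Type*} [Fintype ι] {x f : ι → ℝ} {b : ℝ}

theorem sum_mul_sub_eq_sum_mul_sub (hx : ∑ j, x j = 1) :
    ∑ j, x j * (f j - b) = ∑ j, x j * f j - b := by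
  simp only [mul_sub, sum_sub_distrib, ← sum_mul, hx, one_mul]

theorem le_sum_mul_of_forall_le (hx0 : ∀ j, 0 ≤ x j) (hx : ∑ j, x j = 1)
    (hf : ∀ j, b ≤ f j) : b ≤ ∑ j, x j * f j := by
  have := sum_nonneg fun j (_ : j ∈ univ) => mul_nonneg (hx0 j) (sub_nonneg.2 (hf j))
  rw [sum_mul_sub_eq_sum_mul_sub hx] at this
  linarith

theorem sum_mul_eq_iff_forall_ne_zero_mem {S : Finset ι} (hx0 : ∀ j, 0 ≤ x j)
    (hx : ∑ j, x j = 1) (hin : ∀ j ∈ S, f j = b) (hout : ∀ j ∉ S, b < f j) :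
    ∑ j, x j * f j = b ↔ ∀ j, x j ≠ 0 → j ∈ S := by
  have hf : ∀ j, 0 ≤ f j - b := fun j => by
    by_cases hj : j ∈ S
    · simp [hin j hj]
    · linarith [hout j hj]
  rw [← sub_eq_zero, ← sum_mul_sub_eq_sum_mul_sub hx,
    sum_eq_zero_iff_of_nonneg fun j _ => mul_nonneg (hx0 j) (hf j)]
  refine forall_congr' fun j => ?_
  simp only [mem_univ, true_implies, mul_eq_zero, sub_eq_zero]
  by_cases hj : j ∈ S
  · simp [hj, hin j hj]
  · simp [hj, (hout j hj).ne']

end WeightedMean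

theorem stmt_12_general {d m : ℕ} (a : Fin m → EuclideanSpace ℝ (Fin d))
    (S : Finset (Fin m)) (c : EuclideanSpace ℝ (Fin d)) (r : ℝ) (hr : 0 < r)
    (hin : ∀ j ∈ S, ‖a j - c‖ = r) (hout : ∀ j ∉ S, r < ‖a j - c‖)
    (y : EuclideanSpace ℝ (Fin d))
    (x : Fin m → ℝ)
    (hx0 : ∀ j, 0 ≤ x j) (hxs : ∑ j, x j = 1) (hxy : ∑ j, x j • a j = y) :
    r ^ 2 - ‖y - c‖ ^ 2 ≤ ∑ j, x j * ‖y - a j‖ ^ 2 ∧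
      (∑ j, x j * ‖y - a j‖ ^ 2 = r ^ 2 - ‖y - c‖ ^ 2 ↔ ∀ j, x j ≠ 0 → j ∈ S) := by
  have hin_sq : ∀ j ∈ S, ‖a j - c‖ ^ 2 = r ^ 2 := fun j hj => by rw [hin j hj]
  have hout_sq : ∀ j ∉ S, r ^ 2 < ‖a j - c‖ ^ 2 := fun j hj =>
    pow_lt_pow_left₀ (hout j hj) hr.le two_ne_zero
  have hle : ∀ j, r ^ 2 ≤ ‖a j - c‖ ^ 2 := fun j => by
    by_cases hj : j ∈ S
    · exact (hin_sq j hj).ge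
    · exact (hout_sq j hj).le
  rw [sum_mul_norm_sub_sq_eq_sub hxs hxy c, sub_left_inj,
    sum_mul_eq_iff_forall_ne_zero_mem hx0 hxs hin_sq hout_sq]
  exact ⟨sub_le_sub_right (le_sum_mul_of_forall_le hx0 hxs hle) _, Iff.rfl⟩

theorem stmt_12 {d m : ℕ} (a : Fin m → EuclideanSpace ℝ (Fin d))
    (S : Finset (Fin m)) (c : EuclideanSpace ℝ (Fin d)) (r : ℝ) (hr : 0 < r)
    (hin : ∀ j ∈ S, ‖a j - c‖ = r) (hout : ∀ j ∉ S, r < ‖a j - c‖)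
    (y : EuclideanSpace ℝ (Fin d))
    (hy : ∃ w : Fin m → ℝ, (∀ j, 0 ≤ w j) ∧ (∀ j, w j ≠ 0 → j ∈ S) ∧
      ∑ j, w j = 1 ∧ ∑ j, w j • a j = y)
    (x : Fin m → ℝ)
    (hx0 : ∀ j, 0 ≤ x j) (hxs : ∑ j, x j = 1) (hxy : ∑ j, x j • a j = y) :
    r ^ 2 - ‖y - c‖ ^ 2 ≤ ∑ j, x j * ‖y - a j‖ ^ 2 ∧
      (∑ j, x j * ‖y - a j‖ ^ 2 = r ^ 2 - ‖y - c‖ ^ 2 ↔ ∀ j, x j ≠ 0 → j ∈ S) :=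
  stmt_12_general a S c r hr hin hout y x hx0 hxs hxy
end
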